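/- arXiv:1706.04160 — 2 statements merged into one kernel-verified Lean document; each statement's English description precedes it below -/
import Mathlib

section
/- For all positive integers k and m there exists a constant C, depending only on k and m, with the following property: if L is a lattice, M is a primitive sublattice of L of rank m, and K is a lattice of rank k such that either (i) K is represented by L but not represented by M, or (ii) K is primitively represented by L but not primitively represented by M, then μ_{m+1}(L) ≤ C · max{μ_k(K), μ_m(M)}. Moreover, if max{k, m} ≤ 4, one may take C = 1. -/
open Matrix

namespace Paper

/-- The quadratic map attached to a Gram matrix `G` over a commutative ring. -/
def Qf {R : Type*} [CommRing R] {m : ℕ} (G : Matrix (Fin m) (Fin m) R) (x : Fin m → R) : R :=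
  x ⬝ᵥ (G *ᵥ x)

/-- The bilinear form attached to a Gram matrix `G`. -/
def Bf {R : Type*} [CommRing R] {m : ℕ} (G : Matrix (Fin m) (Fin m) R) (x y : Fin m → R) : R :=
  x ⬝ᵥ (G *ᵥ y)

/-- `G` is the Gram matrix of a positive definite integral `ℤ`-lattice. -/
def IsLat {m : ℕ} (G : Matrix (Fin m) (Fin m) ℤ) : Prop := G.IsSymm ∧ G.PosDef

/-- The lattice with Gram matrix `A` is represented by the lattice with Gram matrix `G`
(the representation is `x ↦ x ᵥ* T`). -/
def Rep {R : Type*} [CommRing R] {k m : ℕ} (A : Matrix (Fin k) (Fin k) R)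
    (G : Matrix (Fin m) (Fin m) R) : Prop :=
  ∃ T : Matrix (Fin k) (Fin m) R, A = T * G * Tᵀ

/-- Primitive representation: the image is a direct summand, i.e. the map `x ↦ x ᵥ* T`
admits a linear retraction. -/
def PrimRep {R : Type*} [CommRing R] {k m : ℕ} (A : Matrix (Fin k) (Fin k) R)
    (G : Matrix (Fin m) (Fin m) R) : Prop :=
  ∃ T : Matrix (Fin k) (Fin m) R, A = T * G * Tᵀ ∧
    ∃ U : Matrix (Fin m) (Fin k) R, T * U = 1

/-- The `p`-adic localization `L_p` of an integral matrix/lattice. -/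
noncomputable def padic (p : ℕ) [Fact p.Prime] {k m : ℕ} (A : Matrix (Fin k) (Fin m) ℤ) :
    Matrix (Fin k) (Fin m) ℤ_[p] := A.map (Int.cast : ℤ → ℤ_[p])

/-- Isometry of two Gram matrices over a commutative ring. -/
def Isom {R : Type*} [CommRing R] {m : ℕ} (A B : Matrix (Fin m) (Fin m) R) : Prop :=
  ∃ T : Matrix (Fin m) (Fin m) R, IsUnit T.det ∧ A = T * B * Tᵀ

/-- `G'` belongs to the genus of `G`. -/
def InGenus {m : ℕ} (G G' : Matrix (Fin m) (Fin m) ℤ) : Prop :=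
  IsLat G' ∧ ∀ (p : ℕ) [Fact p.Prime], Isom (padic p G') (padic p G)

/-- `A` is represented by the genus of `G`. -/
def GenusRep {k m : ℕ} (A : Matrix (Fin k) (Fin k) ℤ) (G : Matrix (Fin m) (Fin m) ℤ) : Prop :=
  ∃ G' : Matrix (Fin m) (Fin m) ℤ, InGenus G G' ∧ Rep A G'

/-- `A` is primitively represented by the genus of `G`. -/
def GenusPrimRep {k m : ℕ} (A : Matrix (Fin k) (Fin k) ℤ) (G : Matrix (Fin m) (Fin m) ℤ) : Prop :=
  ∃ G' : Matrix (Fin m) (Fin m) ℤ, InGenus G G' ∧ PrimRep A G'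

/-- `G` is an `n`-regular lattice. -/
def Regular (n : ℕ) {m : ℕ} (G : Matrix (Fin m) (Fin m) ℤ) : Prop :=
  ∀ A : Matrix (Fin n) (Fin n) ℤ, IsLat A → GenusRep A G → Rep A G

/-- `G` is a strictly `n`-regular lattice. -/
def StrictlyRegular (n : ℕ) {m : ℕ} (G : Matrix (Fin m) (Fin m) ℤ) : Prop :=
  ∀ A : Matrix (Fin n) (Fin n) ℤ, IsLat A → GenusPrimRep A G → PrimRep A G

/-- The `i`-th successive minimum of the lattice with Gram matrix `G`. -/
noncomputable def mu {m : ℕ} (G : Matrix (Fin m) (Fin m) ℤ) (i : ℕ) : ℕ :=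
  sInf {t : ℕ | ∃ v : Fin i → (Fin m → ℤ), LinearIndependent ℤ v ∧ ∀ j, Qf G (v j) ≤ (t : ℤ)}

/-- Two lattices are similar if one is isometric to a positive rational scaling of the other. -/
def Similar {m : ℕ} (G G' : Matrix (Fin m) (Fin m) ℤ) : Prop :=
  ∃ (r : ℚ) (T : Matrix (Fin m) (Fin m) ℤ), 0 < r ∧ IsUnit T.det ∧
    G'.map (Int.cast : ℤ → ℚ) = r • ((T * G * Tᵀ).map (Int.cast : ℤ → ℚ))

/-- The norm ideal `n(L)` of a lattice. -/
def NormIdeal {m : ℕ} (G : Matrix (Fin m) (Fin m) ℤ) : Ideal ℤ :=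
  Ideal.span (Set.range (Qf G))

/-- The scale ideal `s(L)` of a lattice. -/
def ScaleIdeal {m : ℕ} (G : Matrix (Fin m) (Fin m) ℤ) : Ideal ℤ :=
  Ideal.span {a : ℤ | ∃ i j, G i j = a}

/-- A lattice is normalized if its norm ideal is `2ℤ`. -/
def Normalized {m : ℕ} (G : Matrix (Fin m) (Fin m) ℤ) : Prop :=
  NormIdeal G = Ideal.span {(2 : ℤ)}

/-- The Watson sublattice `Λ_k(L)`, as a subset of the underlying module. -/
def Lambda {R : Type*} [CommRing R] (k : ℕ) {m : ℕ} (G : Matrix (Fin m) (Fin m) R) :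
    Set (Fin m → R) :=
  {x | ∀ z, (k : R) ∣ Qf G (x + z) - Qf G z}

/-- The Watson sublattice `Λ_k` of a sublattice `S` (with the quadratic map inherited
from the ambient Gram matrix `G`). -/
def LambdaIn {R : Type*} [CommRing R] (k : ℕ) {m : ℕ} (G : Matrix (Fin m) (Fin m) R)
    (S : Set (Fin m → R)) : Set (Fin m → R) :=
  {x ∈ S | ∀ z ∈ S, (k : R) ∣ Qf G (x + z) - Qf G z}

lemma Qf_add {R : Type*} [CommRing R] {m : ℕ} (G : Matrix (Fin m) (Fin m) R)
    (x z : Fin m → R) :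
    Qf G (x + z) = Qf G x + Qf G z + (x ⬝ᵥ (G *ᵥ z) + z ⬝ᵥ (G *ᵥ x)) := by
  simp [Qf, Matrix.mulVec_add, dotProduct_add, add_dotProduct]
  ring

lemma Qf_smul {R : Type*} [CommRing R] {m : ℕ} (G : Matrix (Fin m) (Fin m) R)
    (c : R) (x : Fin m → R) : Qf G (c • x) = c ^ 2 * Qf G x := by
  simp [Qf, Matrix.mulVec_smul, smul_dotProduct, dotProduct_smul, smul_eq_mul]
  ring

/-- The Watson sublattice `Λ_k(L)` as a `ℤ`-submodule. -/
def LambdaMod (k : ℕ) {m : ℕ} (G : Matrix (Fin m) (Fin m) ℤ) : Submodule ℤ (Fin m → ℤ) where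
  carrier := Lambda k G
  zero_mem' := by intro z; simp
  add_mem' := by
    intro x y hx hy z
    have h := dvd_add (hx (y + z)) (hy z)
    have e : Qf G (x + (y + z)) - Qf G (y + z) + (Qf G (y + z) - Qf G z)
        = Qf G (x + y + z) - Qf G z := by
      rw [add_assoc]; ring
    exact e ▸ h
  smul_mem' := by
    intro c x hx z
    have h0 : (k : ℤ) ∣ Qf G x := by simpa [Qf] using hx 0
    have hz : (k : ℤ) ∣ Qf G x + (x ⬝ᵥ (G *ᵥ z) + z ⬝ᵥ (G *ᵥ x)) := by
      have := hx z
      rwa [Qf_add, show Qf G x + Qf G z + (x ⬝ᵥ (G *ᵥ z) + z ⬝ᵥ (G *ᵥ x)) - Qf G z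
          = Qf G x + (x ⬝ᵥ (G *ᵥ z) + z ⬝ᵥ (G *ᵥ x)) by ring] at this
    have hcross : (k : ℤ) ∣ (x ⬝ᵥ (G *ᵥ z) + z ⬝ᵥ (G *ᵥ x)) := by
      simpa using dvd_sub hz h0
    have key : Qf G (c • x + z) - Qf G z
        = c ^ 2 * Qf G x + c * (x ⬝ᵥ (G *ᵥ z) + z ⬝ᵥ (G *ᵥ x)) := by
      have e1 : (c • x) ⬝ᵥ (G *ᵥ z) = c * (x ⬝ᵥ (G *ᵥ z)) := by
        rw [smul_dotProduct, smul_eq_mul]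
      have e2 : z ⬝ᵥ (G *ᵥ (c • x)) = c * (z ⬝ᵥ (G *ᵥ x)) := by
        rw [Matrix.mulVec_smul, dotProduct_smul, smul_eq_mul]
      rw [Qf_add, Qf_smul, e1, e2]
      ring
    rw [key]
    exact dvd_add (Dvd.dvd.mul_left h0 _) (Dvd.dvd.mul_left hcross c)

/-- The set of values of `Q` on `L_p` is all of `2ℤ_p`. -/
def QValuesFull (p : ℕ) [Fact p.Prime] {m : ℕ} (G : Matrix (Fin m) (Fin m) ℤ) : Prop :=
  Set.range (Qf (padic p G)) = {a : ℤ_[p] | (2 : ℤ_[p]) ∣ a}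

/-- One Watson step followed by scaling by `r`:
`G'` is a Gram matrix of the scaled lattice `Λ_{2p}^{(r)}(G)`. -/
def LambdaScaledStep (p : ℕ) (r : ℚ) {m : ℕ} (G G' : Matrix (Fin m) (Fin m) ℤ) : Prop :=
  ∃ T : Matrix (Fin m) (Fin m) ℤ, LinearIndependent ℤ (fun i => T i) ∧
    Submodule.span ℤ (Set.range T) = LambdaMod (2 * p) G ∧
    G'.map (Int.cast : ℤ → ℚ) = r • ((T * G * Tᵀ).map (Int.cast : ℤ → ℚ))

/-- An admissible chain of scaled Watson transformations at `p`, starting from `G`: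
every intermediate lattice is normalized. -/
def AdmissibleChain (p : ℕ) {m : ℕ} (G : Matrix (Fin m) (Fin m) ℤ) (l : ℕ)
    (rs : Fin l → ℚ) (Ls : Fin (l + 1) → Matrix (Fin m) (Fin m) ℤ) : Prop :=
  Ls 0 = G ∧ (∀ i, 0 < rs i) ∧
  ∀ i : Fin l, LambdaScaledStep p (rs i) (Ls i.castSucc) (Ls i.succ) ∧ Normalized (Ls i.succ)

/-- `L'_p` has an orthogonal direct summand isometric to the hyperbolic plane over `ℤ_p`. -/
def HypSplit (p : ℕ) [Fact p.Prime] {m : ℕ} (L' : Matrix (Fin m) (Fin m) ℤ) : Prop :=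
  ∃ (T : Matrix (Fin m) (Fin m) ℤ_[p]) (i0 i1 : Fin m), i0 ≠ i1 ∧ IsUnit T.det ∧
    (T * padic p L' * Tᵀ) i0 i0 = 0 ∧ (T * padic p L' * Tᵀ) i0 i1 = 1 ∧
    (T * padic p L' * Tᵀ) i1 i0 = 1 ∧ (T * padic p L' * Tᵀ) i1 i1 = 0 ∧
    ∀ j, j ≠ i0 → j ≠ i1 →
      (T * padic p L' * Tᵀ) i0 j = 0 ∧ (T * padic p L' * Tᵀ) i1 j = 0 ∧
      (T * padic p L' * Tᵀ) j i0 = 0 ∧ (T * padic p L' * Tᵀ) j i1 = 0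

/-- The conclusions of Corollary 3.5 for the final lattice `L'` of an admissible chain:
`L'` is a normalized strictly `n`-regular lattice, `Q(L'_p) = 2ℤ_p`, and for every prime
`q ≠ p` the lattice `L'_q` is isometric to a scaling of `G_q`. -/
def GoodTarget (n p : ℕ) [Fact p.Prime] {m : ℕ} (G L' : Matrix (Fin m) (Fin m) ℤ) : Prop :=
  IsLat L' ∧ Normalized L' ∧ StrictlyRegular n L' ∧ QValuesFull p L' ∧
  ∀ (q : ℕ) [Fact q.Prime], q ≠ p →
    ∃ (c : ℚ) (T : Matrix (Fin m) (Fin m) ℤ_[q]), 0 < c ∧ IsUnit T.det ∧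
      L'.map (Int.cast : ℤ → ℚ_[q])
        = (c : ℚ_[q]) • ((T * padic q G * Tᵀ).map ((↑) : ℤ_[q] → ℚ_[q]))

/-! A representation of `K` in `L` that does not factor through `M` moves some vector of a
linearly independent family of minimal vectors of `K` out of `M`, because such a family spans
`ℤᵏ` up to finite index. That image, together with `m` independent vectors of `M` realising
`μ_m(M)`, gives `m + 1` independent vectors of `L` of norm at most `max (μ_k(K), μ_m(M))`, so
`C = 1` works for all `k` and `m`. -/

lemma exists_vecMul_ne_zero_of_linearIndependent {R n p : Type*} [CommRing R] [Fintype n]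
    [DecidableEq n] {v : n → n → R} (hv : LinearIndependent R v) {N : Matrix n p R}
    (hN : N ≠ 0) : ∃ j, v j ᵥ* N ≠ 0 := by
  by_contra! h
  refine hN (Matrix.ext fun i a => ?_)
  have hinj : Function.Injective (Matrix.of v).mulVec :=
    mulVec_injective_iff.mpr (Nonsingular.of_linearIndependent_row hv).linearIndependent_col
  have hcol : Matrix.of v *ᵥ (fun i => N i a) = 0 :=
    funext fun j => congrFun (h j) a
  exact congrFun (hinj (hcol.trans (mulVec_zero _).symm)) i

section Representation

variable {R : Type*} [CommRing R] {k l m : ℕ}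

lemma Qf_mul_mul_transpose (G : Matrix (Fin l) (Fin l) R) (S : Matrix (Fin k) (Fin l) R)
    (w : Fin k → R) : Qf (S * G * Sᵀ) w = Qf G (w ᵥ* S) := by
  rw [Qf, Qf, dotProduct_mulVec, dotProduct_mulVec, ← vecMul_vecMul, ← vecMul_vecMul,
    vecMul_transpose, dotProduct_comm, dotProduct_mulVec, dotProduct_comm]

lemma mul_mul_transpose_of_factor {G : Matrix (Fin l) (Fin l) R} {S : Matrix (Fin k) (Fin l) R}
    {T : Matrix (Fin m) (Fin l) R} {U : Matrix (Fin l) (Fin m) R} (h : S * U * T = S) :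
    (S * U) * (T * G * Tᵀ) * (S * U)ᵀ = S * G * Sᵀ := by
  conv_rhs => rw [← h]
  simp only [transpose_mul, Matrix.mul_assoc]

lemma exists_rep_not_factor {A : Matrix (Fin k) (Fin k) R} {G : Matrix (Fin l) (Fin l) R}
    {T : Matrix (Fin m) (Fin l) R} (U : Matrix (Fin l) (Fin m) R)
    (h : (Rep A G ∧ ¬ Rep A (T * G * Tᵀ)) ∨ (PrimRep A G ∧ ¬ PrimRep A (T * G * Tᵀ))) :
    ∃ S : Matrix (Fin k) (Fin l) R, A = S * G * Sᵀ ∧ S * U * T ≠ S := by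
  rcases h with ⟨⟨S, hS⟩, hnot⟩ | ⟨⟨S, hS, V, hSV⟩, hnot⟩
  · exact ⟨S, hS, fun h => hnot ⟨S * U, by rw [mul_mul_transpose_of_factor h, hS]⟩⟩
  · refine ⟨S, hS, fun h => hnot ⟨S * U, by rw [mul_mul_transpose_of_factor h, hS], T * V, ?_⟩⟩
    rw [← Matrix.mul_assoc, h, hSV]

/-- Vectors fixed by the projection `U * T` onto the row space of `T` are independent from any
vector moved by it. -/
lemma linearIndependent_cons_vecMul [NoZeroDivisors R] {T : Matrix (Fin m) (Fin l) R}
    {U : Matrix (Fin l) (Fin m) R} (hTU : T * U = 1) {u : Fin m → Fin m → R}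
    (hu : LinearIndependent R u) {y : Fin l → R} (hy : y ᵥ* (U * T) ≠ y) :
    LinearIndependent R (Fin.cons y (fun j => u j ᵥ* T) : Fin (m + 1) → Fin l → R) := by
  have hTinj : LinearMap.ker T.vecMulLinear = ⊥ := by
    refine LinearMap.ker_eq_bot_of_injective (Function.LeftInverse.injective (g := (· ᵥ* U)) ?_)
    intro x
    simp only [vecMulLinear_apply, vecMul_vecMul, hTU, vecMul_one]
  have hfix : Submodule.span R (Set.range fun j => u j ᵥ* T) ≤
      LinearMap.ker ((U * T).vecMulLinear - LinearMap.id) := by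
    rw [Submodule.span_le]
    rintro _ ⟨j, rfl⟩
    simp [vecMul_vecMul, ← Matrix.mul_assoc, hTU]
  refine LinearIndependent.finCons' y (fun j => u j ᵥ* T) (hu.map' T.vecMulLinear hTinj)
    fun c x hx hcx => ?_
  have hx' : x ᵥ* (U * T) = x := by simpa [sub_eq_zero] using hfix hx
  have hc : c • (y ᵥ* (U * T) - y) = 0 := by
    calc c • (y ᵥ* (U * T) - y) = (c • y + x) ᵥ* (U * T) - (c • y + x) := by
          rw [add_vecMul, smul_vecMul, hx', smul_sub]; abel
      _ = 0 := by rw [hcx, zero_vecMul, sub_zero]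
  exact (smul_eq_zero.mp hc).resolve_right (sub_ne_zero.mpr hy)

end Representation

section SuccessiveMinima

variable {n i : ℕ}

lemma mu_le_of_linearIndependent {G : Matrix (Fin n) (Fin n) ℤ} {v : Fin i → Fin n → ℤ}
    (hv : LinearIndependent ℤ v) {t : ℕ} (ht : ∀ j, Qf G (v j) ≤ t) : mu G i ≤ t :=
  Nat.sInf_le ⟨v, hv, ht⟩

lemma exists_linearIndependent_Qf_le_mu (G : Matrix (Fin n) (Fin n) ℤ) (hi : i ≤ n) :
    ∃ v : Fin i → Fin n → ℤ, LinearIndependent ℤ v ∧ ∀ j, Qf G (v j) ≤ mu G i := by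
  suffices hne : {t : ℕ | ∃ v : Fin i → Fin n → ℤ, LinearIndependent ℤ v ∧
      ∀ j, Qf G (v j) ≤ t}.Nonempty from Nat.sInf_mem hne
  refine ⟨∑ a, (G a a).toNat, fun j => Pi.single (Fin.castLE hi j) 1,
    (Pi.linearIndependent_single_one (Fin n) ℤ).comp _ (Fin.castLE_injective hi), fun j => ?_⟩
  have hdiag : Qf G (Pi.single (Fin.castLE hi j) 1) = G (Fin.castLE hi j) (Fin.castLE hi j) := by
    simp [Qf]
  rw [hdiag]
  calc _ ≤ ((G (Fin.castLE hi j) (Fin.castLE hi j)).toNat : ℤ) := Int.self_le_toNat _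
    _ ≤ _ := by
      exact_mod_cast Finset.single_le_sum (fun a _ => Nat.zero_le (G a a).toNat)
        (Finset.mem_univ _)

end SuccessiveMinima

theorem mu_bound_via_nonrepresented_general (k m : ℕ) :
    ∃ C : ℕ, (max k m ≤ 4 → C = 1) ∧
      ∀ (l : ℕ) (G : Matrix (Fin l) (Fin l) ℤ), IsLat G →
        ∀ T : Matrix (Fin m) (Fin l) ℤ,
          (∃ U : Matrix (Fin l) (Fin m) ℤ, T * U = 1) →
          ∀ A : Matrix (Fin k) (Fin k) ℤ, IsLat A →
            ((Rep A G ∧ ¬ Rep A (T * G * Tᵀ)) ∨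
              (PrimRep A G ∧ ¬ PrimRep A (T * G * Tᵀ))) →
            mu G (m + 1) ≤ C * max (mu A k) (mu (T * G * Tᵀ) m) := by
  refine ⟨1, fun _ => rfl, ?_⟩
  rintro l G - T ⟨U, hTU⟩ A - hrep
  obtain ⟨S, hS, hSUT⟩ := exists_rep_not_factor U hrep
  obtain ⟨v, hv, hvA⟩ := exists_linearIndependent_Qf_le_mu A le_rfl
  obtain ⟨u, hu, huM⟩ := exists_linearIndependent_Qf_le_mu (T * G * Tᵀ) le_rfl
  obtain ⟨j, hj⟩ := exists_vecMul_ne_zero_of_linearIndependent hv (sub_ne_zero.mpr hSUT)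
  have hmoved : v j ᵥ* S ᵥ* (U * T) ≠ v j ᵥ* S := by
    rwa [vecMul_vecMul, ← Matrix.mul_assoc, ← sub_ne_zero, ← vecMul_sub]
  rw [one_mul]
  refine mu_le_of_linearIndependent (linearIndependent_cons_vecMul hTU hu hmoved)
    (Fin.cases ?_ fun i => ?_)
  · rw [Fin.cons_zero, ← Qf_mul_mul_transpose, ← hS]
    exact (hvA j).trans (mod_cast le_max_left _ _)
  · rw [Fin.cons_succ, ← Qf_mul_mul_transpose]
    exact (huM i).trans (mod_cast le_max_right _ _)

/-- bounding `μ_{m+1}(L)` via a lattice `K` (primitively) represented by `L` but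
not by a primitive rank-`m` sublattice `M` of `L` (given by the rows of `T`). -/
theorem mu_bound_via_nonrepresented (k m : ℕ) (hk : 0 < k) (hm : 0 < m) :
    ∃ C : ℕ, (max k m ≤ 4 → C = 1) ∧
      ∀ (l : ℕ) (G : Matrix (Fin l) (Fin l) ℤ), IsLat G →
        ∀ T : Matrix (Fin m) (Fin l) ℤ,
          (∃ U : Matrix (Fin l) (Fin m) ℤ, T * U = 1) →
          ∀ A : Matrix (Fin k) (Fin k) ℤ, IsLat A →
            ((Rep A G ∧ ¬ Rep A (T * G * Tᵀ)) ∨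
              (PrimRep A G ∧ ¬ PrimRep A (T * G * Tᵀ))) →
            mu G (m + 1) ≤ C * max (mu A k) (mu (T * G * Tᵀ) m) :=
  mu_bound_via_nonrepresented_general k m

end Paper
end

section
/- Let L be a normalized lattice and p a prime such that Q(L_p) ≠ 2ℤ_p (i.e., the set of values of Q on L_p is not all of 2ℤ_p). Then Λ_{2p}(L_p) = {x ∈ L_p : Q(x) ∈ 2pℤ_p}. -/
open Matrix

/-!
Since `Q(x + z) - Q(z) = Q(x) + 2B(x, z)`, a vector `x` with `Q(x) ∈ 2pℤ_p` lies in `Λ_{2p}(L_p)`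
exactly when `B(x, L_p) ⊆ pℤ_p`. If instead `B(x, z)` is a unit for some `z`, write
`Q(x) = 2pa` and `Q(z) = 2c` (`Q` is even on `L_p` because `n(L) = 2ℤ`); then
`Q(αx + z) = 2(paα² + B(x, z)α + c)`, and by Hensel's lemma the quadratic `paα² + B(x, z)α + c - t`
has a root for every `t ∈ ℤ_p`. So `Q(L_p) = 2ℤ_p`, which is excluded.
-/

namespace PadicInt

lemma isUnit_iff_not_dvd {p : ℕ} [Fact p.Prime] (x : ℤ_[p]) :
    IsUnit x ↔ ¬ (p : ℤ_[p]) ∣ x := by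
  rw [← norm_lt_one_iff_dvd, ← not_isUnit_iff, not_not]

lemma exists_eval_eq_zero_of_dvd_of_isUnit {p : ℕ} [Fact p.Prime]
    {F : Polynomial ℤ_[p]} {a : ℤ_[p]} (hFa : (p : ℤ_[p]) ∣ F.eval a)
    (hF'a : IsUnit (F.derivative.eval a)) : ∃ z, F.eval z = 0 := by
  have hnorm : ‖F.aeval a‖ < ‖F.derivative.aeval a‖ ^ 2 := by
    rwa [Polynomial.coe_aeval_eq_eval, isUnit_iff.mp hF'a, one_pow, norm_lt_one_iff_dvd]
  obtain ⟨z, hz, -⟩ := hensels_lemma hnorm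
  exact ⟨z, by rwa [Polynomial.coe_aeval_eq_eval] at hz⟩

open Polynomial in
lemma exists_p_mul_sq_add_mul_add_eq_zero {p : ℕ} [Fact p.Prime] (a c : ℤ_[p])
    {b : ℤ_[p]} (hb : IsUnit b) : ∃ α : ℤ_[p], p * a * α ^ 2 + b * α + c = 0 := by
  obtain ⟨u, rfl⟩ := hb
  let F : ℤ_[p][X] := C (p * a) * X ^ 2 + C (u : ℤ_[p]) * X + C c
  have hF : ∀ x, F.eval x = p * a * x ^ 2 + u * x + c := fun x => by simp [F]
  have hF' : ∀ x, F.derivative.eval x = p * (2 * a * x) + u := fun x => by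
    simp [F]; ring
  -- Modulo `p` the equation is linear, with root `-u⁻¹ c`; Hensel lifts it.
  set α₀ : ℤ_[p] := -(↑u⁻¹ * c)
  have hu : (u : ℤ_[p]) * α₀ = -c := by simp [α₀, ← mul_assoc]
  obtain ⟨α, hα⟩ := exists_eval_eq_zero_of_dvd_of_isUnit (F := F) (a := α₀)
    ⟨a * α₀ ^ 2, by rw [hF]; linear_combination hu⟩
    (by
      rw [isUnit_iff_not_dvd, hF']
      intro h
      exact (isUnit_iff_not_dvd _).mp u.isUnit <| by
        simpa using h.sub (dvd_mul_right (p : ℤ_[p]) (2 * a * α₀)))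
  exact ⟨α, by rwa [hF] at hα⟩

end PadicInt

namespace Paper

section SymmetricGram

variable {R : Type*} [CommRing R] {m : ℕ} {G : Matrix (Fin m) (Fin m) R}

lemma Bf_comm (hG : G.IsSymm) (x z : Fin m → R) : Bf G z x = Bf G x z := by
  rw [Bf, Bf, Matrix.dotProduct_mulVec, ← Matrix.mulVec_transpose, hG.eq, dotProduct_comm]

lemma Qf_add_of_isSymm (hG : G.IsSymm) (x z : Fin m → R) :
    Qf G (x + z) = Qf G x + Qf G z + 2 * Bf G x z := by
  have h := Bf_comm hG x z
  simp only [Bf] at h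
  rw [Qf_add, h, Bf]
  ring

lemma Qf_single (G : Matrix (Fin m) (Fin m) R) (i : Fin m) (c : R) :
    Qf G (Pi.single i c) = G i i * c ^ 2 := by
  simp [Qf, Matrix.mulVec_single, single_dotProduct]
  ring

lemma two_dvd_Qf (hG : G.IsSymm) (hdiag : ∀ i, (2 : R) ∣ G i i) (v : Fin m → R) :
    (2 : R) ∣ Qf G v := by
  rw [← Finset.univ_sum_single v]
  refine Finset.sum_induction _ (fun w => (2 : R) ∣ Qf G w) (fun x y hx hy => ?_)
    (by simp [Qf]) (fun i _ => ?_)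
  · rw [Qf_add_of_isSymm hG]
    exact (hx.add hy).add (dvd_mul_right _ _)
  · rw [Qf_single]
    exact (hdiag i).mul_right _

lemma mem_Lambda_iff (hG : G.IsSymm) {k : ℕ} {x : Fin m → R} :
    x ∈ Lambda k G ↔ (k : R) ∣ Qf G x ∧ ∀ z, (k : R) ∣ 2 * Bf G x z := by
  have hdiff : ∀ z, Qf G (x + z) - Qf G z = Qf G x + 2 * Bf G x z := fun z => by
    rw [Qf_add_of_isSymm hG]; ring
  simp only [Lambda, Set.mem_ofPred_eq, hdiff]
  refine ⟨fun h => ?_, fun ⟨hx, hB⟩ z => hx.add (hB z)⟩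
  have hx : (k : R) ∣ Qf G x := by simpa [Bf] using h 0
  exact ⟨hx, fun z => (dvd_add_right hx).mp (h z)⟩

end SymmetricGram

lemma two_dvd_diag_of_normalized {m : ℕ} {G : Matrix (Fin m) (Fin m) ℤ}
    (hnorm : Normalized G) (i : Fin m) : (2 : ℤ) ∣ G i i := by
  have h : Qf G (Pi.single i 1) ∈ NormIdeal G := Ideal.subset_span ⟨_, rfl⟩
  rwa [hnorm, Ideal.mem_span_singleton, Qf_single, one_pow, mul_one] at h

lemma range_Qf_eq_of_isUnit_Bf {p : ℕ} [Fact p.Prime] {m : ℕ}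
    {G : Matrix (Fin m) (Fin m) ℤ_[p]} (hG : G.IsSymm) (heven : ∀ v, (2 : ℤ_[p]) ∣ Qf G v)
    {x z : Fin m → ℤ_[p]} (hx : ((2 * p : ℕ) : ℤ_[p]) ∣ Qf G x) (hxz : IsUnit (Bf G x z)) :
    Set.range (Qf G) = {a | (2 : ℤ_[p]) ∣ a} := by
  refine Set.Subset.antisymm (Set.range_subset_iff.mpr heven) ?_
  rintro _ ⟨t, rfl⟩
  obtain ⟨a, ha⟩ := hx
  obtain ⟨c, hc⟩ := heven z
  obtain ⟨α, hα⟩ := PadicInt.exists_p_mul_sq_add_mul_add_eq_zero a (c - t) hxz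
  refine ⟨α • x + z, ?_⟩
  have hB : Bf G (α • x) z = α * Bf G x z := by
    simp only [Bf, smul_dotProduct, smul_eq_mul]
  rw [Qf_add_of_isSymm hG, Qf_smul, hB, ha, hc]
  push_cast
  linear_combination 2 * hα

/-- for a normalized lattice with `Q(L_p) ≠ 2ℤ_p`,
`Λ_{2p}(L_p) = {x ∈ L_p : Q(x) ∈ 2pℤ_p}`. -/
theorem lambda_two_p_eq (p : ℕ) [Fact p.Prime] {m : ℕ} (G : Matrix (Fin m) (Fin m) ℤ)
    (hG : IsLat G) (hnorm : Normalized G) (hcond : ¬ QValuesFull p G) :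
    Lambda (2 * p) (padic p G)
      = {x : Fin m → ℤ_[p] | ((2 * p : ℕ) : ℤ_[p]) ∣ Qf (padic p G) x} := by
  have hsymm : (padic p G).IsSymm := hG.1.map _
  have heven : ∀ v, (2 : ℤ_[p]) ∣ Qf (padic p G) v := two_dvd_Qf hsymm fun i => by
    simpa [padic] using map_dvd (Int.castRingHom ℤ_[p]) (two_dvd_diag_of_normalized hnorm i)
  ext x
  rw [mem_Lambda_iff hsymm, Set.mem_ofPred_eq, and_iff_left_iff_imp]
  intro hx z
  have hp : (p : ℤ_[p]) ∣ Bf (padic p G) x z := by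
    by_contra h
    exact hcond (range_Qf_eq_of_isUnit_Bf hsymm heven hx ((PadicInt.isUnit_iff_not_dvd _).mpr h))
  rw [Nat.cast_mul, Nat.cast_ofNat]
  exact mul_dvd_mul_left 2 hp

end Paper
end
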